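/- Suppose M > 1, ρ₀ = M − √(M²−1), and h, g are holomorphic on the unit disk with h(0) = g(0) = 0, ||h'(0)| − |g'(0)|| = 1, and |h'(z) − h'(0)| + |g'(z) − g'(0)| ≤ (M²−1)(2M|z| − |z|²)/(M−|z|)² for |z| < ρ₀. Then for every unimodular λ and every z' with |z'| = ρ₀ (taking radial limits / continuity), |h(z') + λ g(z')| ≥ M ρ₀². -/

import Mathlib

/-! With `F = h + λ g` we have `F 0 = 0` and `1 ≤ ‖F' 0‖` by the reverse triangle inequality.
The derivative hypothesis bounds `‖F' z - F' 0‖` by the derivative of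
`G t = (M² - 1) t² / (M - t)`, so `G` dominates the Taylor remainder `F z - F' 0 z` along the
radius through `z'`, and `‖F z'‖ ≥ ρ₀ - G ρ₀ = M ρ₀²` because `ρ₀ (M + √(M² - 1)) = 1`. -/

open Metric Set

theorem norm_sub_sub_smul_deriv_le_of_norm_deriv_sub_le {E : Type*} [NormedAddCommGroup E]
    [NormedSpace ℂ E] {F : ℂ → E} {z : ℂ} {G G' : ℝ → ℝ}
    (hF : ∀ w : ℂ, ‖w‖ ≤ ‖z‖ → DifferentiableAt ℂ F w)
    (hGc : ContinuousOn G (Icc 0 ‖z‖))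
    (hG : ∀ s ∈ Ico 0 ‖z‖, HasDerivWithinAt G (G' s) (Ici s) s) (hG0 : 0 ≤ G 0)
    (hbound : ∀ w : ℂ, ‖w‖ < ‖z‖ → ‖deriv F w - deriv F 0‖ ≤ G' ‖w‖) :
    ‖F z - F 0 - z • deriv F 0‖ ≤ G ‖z‖ := by
  rcases eq_or_ne z 0 with rfl | hz
  · simpa using hG0
  set u : ℂ := ‖z‖⁻¹ • z
  have hz_eq : ‖z‖ • u = z := smul_inv_smul₀ (norm_ne_zero_iff.2 hz) z
  have hu : ‖u‖ = 1 := by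
    rw [norm_smul, norm_inv, norm_norm, inv_mul_cancel₀ (norm_ne_zero_iff.2 hz)]
  have hnorm : ∀ s : ℝ, 0 ≤ s → ‖s • u‖ = s := fun s hs => by
    rw [norm_smul, hu, mul_one, Real.norm_of_nonneg hs]
  have hφ : ∀ s ∈ Icc 0 ‖z‖, HasDerivAt (fun s : ℝ => F (s • u) - F 0 - (s • u) • deriv F 0)
      (u • deriv F (s • u) - u • deriv F 0) s := by
    intro s hs
    have hF_s := (hF _ ((hnorm s hs.1).trans_le hs.2)).hasDerivAt.hasFDerivAt.restrictScalars ℝ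
    have hpath := (hasDerivAt_id s).smul_const u
    exact (((hF_s.comp_hasDerivAt s hpath).sub_const (F 0)).sub
      (hpath.smul_const (deriv F 0))).congr_deriv (by simp)
  have key := image_norm_le_of_norm_deriv_right_le_deriv_boundary'
    (fun s hs => (hφ s hs).continuousAt.continuousWithinAt)
    (fun s hs => (hφ s (Ico_subset_Icc_self hs)).hasDerivWithinAt) (by simpa using hG0) hGc hG
    (fun s hs => ?_) (right_mem_Icc.2 (norm_nonneg z))
  · simpa only [hz_eq] using key
  · rw [← smul_sub, norm_smul, hu, one_mul]
    simpa only [hnorm s hs.1] using hbound _ ((hnorm s hs.1).trans_lt hs.2)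

theorem deriv_add_const_mul {𝕜 : Type*} [NontriviallyNormedField 𝕜] {h g : 𝕜 → 𝕜} {w : 𝕜}
    (c : 𝕜) (hh : DifferentiableAt 𝕜 h w) (hg : DifferentiableAt 𝕜 g w) :
    deriv (fun z => h z + c * g z) w = deriv h w + c * deriv g w := by
  rw [deriv_fun_add hh (hg.const_mul c), deriv_const_mul c hg]

theorem abs_norm_sub_norm_le_norm_add_mul {𝕜 : Type*} [NormedDivisionRing 𝕜] (a b c : 𝕜)
    (hc : ‖c‖ = 1) : |‖a‖ - ‖b‖| ≤ ‖a + c * b‖ := by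
  simpa [norm_mul, hc] using abs_norm_sub_norm_le a (-(c * b))

theorem norm_add_mul_sub_add_mul_le {𝕜 : Type*} [NormedDivisionRing 𝕜] (a a' b b' c : 𝕜)
    (hc : ‖c‖ = 1) : ‖(a + c * b) - (a' + c * b')‖ ≤ ‖a - a'‖ + ‖b - b'‖ := by
  rw [add_sub_add_comm, ← mul_sub]
  simpa [norm_mul, hc] using norm_add_le (a - a') (c * (b - b'))

theorem hasDerivAt_mul_sq_div_sub (c M t : ℝ) (ht : t ≠ M) :
    HasDerivAt (fun t => c * t ^ 2 / (M - t)) (c * (2 * M * t - t ^ 2) / (M - t) ^ 2) t := by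
  have hMt : M - t ≠ 0 := sub_ne_zero.2 ht.symm
  refine (((hasDerivAt_pow 2 t).const_mul c).div ((hasDerivAt_id t).const_sub M) hMt).congr_deriv ?_
  simp only [id]
  field_simp
  ring

theorem sub_sqrt_sq_sub_one_mem_Ioo {M : ℝ} (hM : 1 < M) : M - √(M ^ 2 - 1) ∈ Ioo 0 1 := by
  have hs := Real.sq_sqrt (by nlinarith : (0 : ℝ) ≤ M ^ 2 - 1)
  have hs0 := Real.sqrt_nonneg (M ^ 2 - 1)
  constructor <;> nlinarith

theorem sub_mul_sq_div_sub_eq_mul_sq {M ρ : ℝ} (hM : 1 < M) (hρ : ρ = M - √(M ^ 2 - 1)) :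
    ρ - (M ^ 2 - 1) * ρ ^ 2 / (M - ρ) = M * ρ ^ 2 := by
  have hs := Real.sq_sqrt (by nlinarith : (0 : ℝ) ≤ M ^ 2 - 1)
  have hs0 : 0 < √(M ^ 2 - 1) := Real.sqrt_pos.2 (by nlinarith)
  set s := √(M ^ 2 - 1)
  rw [hρ, sub_sub_cancel, ← hs]
  field_simp
  linear_combination (M - s) * hs

theorem stmt_16 (M : ℝ) (hM : 1 < M) (h g : ℂ → ℂ)
    (hh : DifferentiableOn ℂ h (ball (0 : ℂ) 1))
    (hg : DifferentiableOn ℂ g (ball (0 : ℂ) 1))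
    (h0 : h 0 = 0) (g0 : g 0 = 0)
    (hlam0 : |‖deriv h 0‖ - ‖deriv g 0‖| = 1)
    (hbd : ∀ z : ℂ, ‖z‖ < M - Real.sqrt (M ^ 2 - 1) →
      ‖deriv h z - deriv h 0‖ + ‖deriv g z - deriv g 0‖ ≤
        (M ^ 2 - 1) * (2 * M * ‖z‖ - (‖z‖) ^ 2) /
          (M - ‖z‖) ^ 2) :
    ∀ lam : ℂ, ‖lam‖ = 1 →
      ∀ z' : ℂ, ‖z'‖ = M - Real.sqrt (M ^ 2 - 1) →
        M * (M - Real.sqrt (M ^ 2 - 1)) ^ 2 ≤ ‖h z' + lam * g z'‖ := by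
  intro lam hlam z' hz'
  obtain ⟨hρ0, hρ1⟩ := sub_sqrt_sq_sub_one_mem_Ioo hM
  set ρ := M - √(M ^ 2 - 1)
  have hρM : ρ < M := sub_lt_self M (Real.sqrt_pos.2 (by nlinarith))
  have hdiff : ∀ w : ℂ, ‖w‖ ≤ ρ → DifferentiableAt ℂ h w ∧ DifferentiableAt ℂ g w := fun w hw =>
    have hw1 : w ∈ ball (0 : ℂ) 1 := mem_ball_zero_iff.2 (hw.trans_lt hρ1)
    ⟨hh.differentiableAt (isOpen_ball.mem_nhds hw1), hg.differentiableAt (isOpen_ball.mem_nhds hw1)⟩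
  set F : ℂ → ℂ := fun z => h z + lam * g z
  have hderiv : ∀ w : ℂ, ‖w‖ ≤ ρ → deriv F w = deriv h w + lam * deriv g w := fun w hw =>
    deriv_add_const_mul lam (hdiff w hw).1 (hdiff w hw).2
  have hderiv0 := hderiv 0 (by simpa using hρ0.le)
  have hF'0 : 1 ≤ ‖deriv F 0‖ := by
    simpa [hderiv0, hlam0] using abs_norm_sub_norm_le_norm_add_mul (deriv h 0) (deriv g 0) lam hlam
  have hrem : ‖F z' - F 0 - z' • deriv F 0‖ ≤ (M ^ 2 - 1) * ρ ^ 2 / (M - ρ) := by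
    rw [← hz']
    refine norm_sub_sub_smul_deriv_le_of_norm_deriv_sub_le (fun w hw => ?_)
      (ContinuousOn.div (by fun_prop) (by fun_prop) fun t ht => ?_)
      (fun t ht => (hasDerivAt_mul_sq_div_sub _ M t ?_).hasDerivWithinAt) (by simp) fun w hw => ?_
    · exact (hdiff w (hw.trans_eq hz')).1.add ((hdiff w (hw.trans_eq hz')).2.const_mul lam)
    · linarith [ht.2]
    · linarith [ht.2]
    · rw [hz'] at hw
      rw [hderiv w hw.le, hderiv0]
      exact (norm_add_mul_sub_add_mul_le _ _ _ _ lam hlam).trans (hbd w hw)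
  have hF0 : F 0 = 0 := by simp [F, h0, g0]
  rw [hF0, sub_zero, norm_sub_rev] at hrem
  calc M * ρ ^ 2 = ρ - (M ^ 2 - 1) * ρ ^ 2 / (M - ρ) := (sub_mul_sq_div_sub_eq_mul_sq hM rfl).symm
    _ ≤ ‖z' • deriv F 0‖ - ‖z' • deriv F 0 - F z'‖ := by
      rw [norm_smul, hz']
      nlinarith [mul_le_mul_of_nonneg_left hF'0 hρ0.le]
    _ ≤ ‖F z'‖ := by simpa using norm_sub_norm_le (z' • deriv F 0) (z' • deriv F 0 - F z')
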